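/- arXiv:2509.04247 — 2 statements merged into one kernel-verified Lean document; each statement's English description precedes it below -/
import Mathlib

section
/- Let C be the Reed-Solomon code of dimension k evaluated at n distinct points α_1,…,α_n ∈ 𝔽_q (the image of polynomials of degree < k under evaluation). Then the Schur square C * C equals the Reed-Solomon code of dimension min(2k-1, n) at the same points, and hence dim(C * C) = min(2k - 1, n). -/
/-- The Schur (componentwise) product of two linear codes in `F^n`. -/
def schurProduct {F : Type*} [Field F] {n : ℕ} (C D : Submodule F (Fin n → F)) :
    Submodule F (Fin n → F) :=
  Submodule.span F {x | ∃ c ∈ C, ∃ d ∈ D, x = c * d}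

/-- The Reed-Solomon code of dimension `k` with evaluation points `α 1, …, α n`:
the set of evaluation vectors of polynomials of degree `< k`. -/
def RSCode {F : Type*} [Field F] {n : ℕ} (α : Fin n → F) (k : ℕ) :
    Submodule F (Fin n → F) :=
  Submodule.span F
    {v | ∃ p : Polynomial F, p.degree < (k : ℕ) ∧ v = fun i => Polynomial.eval (α i) p}

/-!
Evaluation at the points `α i` is an algebra homomorphism `F[X] → F^n`, and `RSCode α m` is the
image of the polynomials of degree `< m`. Schur products of images are images of products, and
the product of the spaces of polynomials of degree `≤ k` and `≤ l` is that of degree `≤ k + l`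
(spanned by `X ^ a * X ^ b`). Since the points are distinct, evaluation is injective on
polynomials of degree `< n`, which gives the dimension and shows that the code is all of `F^n` as
soon as `m ≥ n`.
-/

open Polynomial Module

namespace Polynomial

theorem X_pow_mem_degreeLE {R : Type*} [Semiring R] {a b : ℕ} (hab : a ≤ b) :
    (X : R[X]) ^ a ∈ degreeLE R b :=
  mem_degreeLE.2 ((degree_X_pow_le a).trans (WithBot.coe_le_coe.2 hab))

theorem degreeLE_mul_degreeLE {R : Type*} [CommSemiring R] (k l : ℕ) :
    degreeLE R k * degreeLE R l = degreeLE R (k + l : ℕ) := by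
  classical
  apply le_antisymm
  · refine Submodule.mul_le.2 fun p hp q hq => mem_degreeLE.2 ?_
    rw [Nat.cast_add]
    exact degree_mul_le_of_le (mem_degreeLE.1 hp) (mem_degreeLE.1 hq)
  · rw [degreeLE_eq_span_X_pow, Submodule.span_le]
    rintro _ hmem
    obtain ⟨j, hj, rfl⟩ := Finset.mem_image.1 (Finset.mem_coe.1 hmem)
    rw [Finset.mem_range] at hj
    have hsplit : j = min j k + (j - min j k) := by omega
    rw [hsplit, pow_add]
    exact Submodule.mul_mem_mul (X_pow_mem_degreeLE (min_le_right j k))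
      (X_pow_mem_degreeLE (by omega))

theorem degreeLT_succ_mul_degreeLT_succ {R : Type*} [CommSemiring R] (k l : ℕ) :
    degreeLT R (k + 1) * degreeLT R (l + 1) = degreeLT R (k + l + 1) := by
  simp only [degreeLT_succ_eq_degreeLE, degreeLE_mul_degreeLE, Nat.cast_add]

end Polynomial

theorem Submodule.finrank_map_of_injOn {K V W : Type*} [DivisionRing K] [AddCommGroup V]
    [Module K V] [AddCommGroup W] [Module K W] (f : V →ₗ[K] W) (p : Submodule K V)
    (hf : Set.InjOn f p) : finrank K (p.map f) = finrank K p := by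
  rw [← LinearMap.range_domRestrict]
  exact LinearMap.finrank_range_of_inj fun x y hxy => Subtype.ext (hf x.2 y.2 hxy)

theorem schurProduct_eq_mul {F : Type*} [Field F] {n : ℕ} (C D : Submodule F (Fin n → F)) :
    schurProduct C D = C * D := by
  rw [schurProduct, Submodule.mul_eq_span_mul_set]
  congr 1
  ext x
  simp only [Set.mem_ofPred_eq, Set.mem_mul, SetLike.mem_coe, eq_comm]

section RSCode

variable {F : Type*} [Field F] {n : ℕ} (α : Fin n → F)

noncomputable def multipointEval : F[X] →ₐ[F] (Fin n → F) :=
  AlgHom.pi fun i => aeval (α i)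

theorem multipointEval_apply (p : F[X]) (i : Fin n) : multipointEval α p i = p.eval (α i) :=
  congrFun (coe_aeval_eq_eval (α i)) p

theorem RSCode_eq_map (m : ℕ) :
    RSCode α m = (degreeLT F m).map (multipointEval α).toLinearMap := by
  rw [RSCode, ← Submodule.span_eq ((degreeLT F m).map _)]
  congr 1
  ext v
  simp only [Set.mem_ofPred_eq, SetLike.mem_coe, Submodule.mem_map, mem_degreeLT,
    AlgHom.toLinearMap_apply, funext_iff, multipointEval_apply, eq_comm]

theorem RSCode_mono : Monotone (RSCode α) := fun a b hab => by
  simp only [RSCode_eq_map]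
  exact Submodule.map_mono (degreeLT_mono hab)

theorem schurProduct_RSCode_succ (k l : ℕ) :
    schurProduct (RSCode α (k + 1)) (RSCode α (l + 1)) = RSCode α (k + l + 1) := by
  simp only [schurProduct_eq_mul, RSCode_eq_map, ← Submodule.map_mul,
    degreeLT_succ_mul_degreeLT_succ]

variable {α}

theorem injOn_multipointEval_degreeLT (hα : Function.Injective α) :
    Set.InjOn (multipointEval α) (degreeLT F n) := fun p hp q hq hpq => by
  refine eq_of_degree_sub_lt_of_eval_index_eq Finset.univ hα.injOn ?_ fun i _ => ?_
  · rw [Finset.card_univ, Fintype.card_fin, ← mem_degreeLT]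
    exact Submodule.sub_mem _ hp hq
  · simp only [← multipointEval_apply, hpq]

theorem finrank_RSCode (hα : Function.Injective α) {m : ℕ} (hm : m ≤ n) :
    finrank F (RSCode α m) = m := by
  rw [RSCode_eq_map, Submodule.finrank_map_of_injOn _ _
      ((injOn_multipointEval_degreeLT hα).mono (degreeLT_mono hm)),
    (degreeLTEquiv F m).finrank_eq, finrank_fin_fun]

theorem RSCode_eq_top (hα : Function.Injective α) {m : ℕ} (hm : n ≤ m) : RSCode α m = ⊤ := by
  refine top_unique (le_trans (Submodule.eq_top_of_finrank_eq ?_).ge (RSCode_mono α hm))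
  rw [finrank_RSCode hα le_rfl, finrank_fin_fun]

theorem RSCode_min (hα : Function.Injective α) (m : ℕ) : RSCode α (min m n) = RSCode α m := by
  rcases le_total m n with h | h
  · rw [min_eq_left h]
  · rw [min_eq_right h, RSCode_eq_top hα le_rfl, RSCode_eq_top hα h]

end RSCode

theorem schur_square_RSCode_general {F : Type*} [Field F] {n : ℕ}
    (α : Fin n → F) (hα : Function.Injective α) (k : ℕ) (hk1 : 1 ≤ k) :
    schurProduct (RSCode α k) (RSCode α k) = RSCode α (min (2 * k - 1) n) ∧
      Module.finrank F (schurProduct (RSCode α k) (RSCode α k)) = min (2 * k - 1) n := by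
  have hsquare : schurProduct (RSCode α k) (RSCode α k) = RSCode α (2 * k - 1) := by
    obtain ⟨j, rfl⟩ : ∃ j, k = j + 1 := ⟨k - 1, by omega⟩
    rw [schurProduct_RSCode_succ, show 2 * (j + 1) - 1 = j + j + 1 by omega]
  rw [hsquare, ← RSCode_min hα]
  exact ⟨rfl, finrank_RSCode hα (min_le_right _ _)⟩

/-- For the Reed-Solomon code `C` of dimension `k` at `n` distinct points, the Schur square
`C * C` equals the Reed-Solomon code of dimension `min (2k - 1) n` at the same points, and
hence `dim (C * C) = min (2k - 1) n`. -/
theorem schur_square_RSCode {F : Type*} [Field F] [Fintype F] {n : ℕ}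
    (α : Fin n → F) (hα : Function.Injective α) (k : ℕ) (hk1 : 1 ≤ k) (hkn : k ≤ n) :
    schurProduct (RSCode α k) (RSCode α k) = RSCode α (min (2 * k - 1) n) ∧
      Module.finrank F (schurProduct (RSCode α k) (RSCode α k)) = min (2 * k - 1) n :=
  schur_square_RSCode_general α hα k hk1
end

section
/- With notation as above, C_L(D, G) is MDS (d = n-k+1) if and only if for any k-1 points P_{i_1},…,P_{i_{k-1}} in supp(D), the point Q = G ⊖ P_{i_1} ⊖ ⋯ ⊖ P_{i_{k-1}} (the unique point such that G - ΣP_{i_t} - Q is equivalent to a principal divisor, via the elliptic group law) satisfies Q ∉ supp(D) or Q ∈ {P_{i_1},…,P_{i_{k-1}}}. -/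
/-- The degree `Σ n_P` of a divisor. -/
def divDeg {Pt : Type*} (D : Pt →₀ ℤ) : ℤ := D.sum fun _ n => n

/-- The group-law sum `⊕ [n_P] P` of a divisor, computed in the group of points. -/
def divPointSum {Pt : Type*} [AddCommGroup Pt] (D : Pt →₀ ℤ) : Pt := D.sum fun P n => n • P

/-!
A codeword `(f(P₁), …, f(Pₙ))`, `f ∈ L(G)`, vanishing on `{P_i | i ∈ T}` comes from a nonzero element
of `L(G - Σ_{i ∈ T} P_i)`; evaluation is injective since `deg G = k < n`. Riemann–Roch in degree one
gives a codeword with `k - 1` prescribed zeros, so `d ≤ n - k + 1`, with equality iff no nonzero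
codeword has `k` zeros. For `#T = k` the divisor `G - Σ_{i ∈ T} P_i` has degree zero, so
`L(G - Σ_{i ∈ T} P_i) ≠ 0` iff it is principal, iff `Σ_{i ∈ T} P_i = ⊕G` in the group law.
Splitting such a `T` into `k - 1` points and `Q = G ⊖ Σ_t P_{i_t}` gives the condition.
-/

open Finset

section Divisors

variable {Pt : Type*}

lemma divDeg_eq_degree (D : Pt →₀ ℤ) : divDeg D = Finsupp.degree D := rfl

lemma divDeg_sub (A B : Pt →₀ ℤ) : divDeg (A - B) = divDeg A - divDeg B := by
  simp only [divDeg_eq_degree, map_sub]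

lemma divDeg_neg (A : Pt →₀ ℤ) : divDeg (-A) = -divDeg A := by
  simp only [divDeg_eq_degree, map_neg]

lemma divDeg_single (Q : Pt) (m : ℤ) : divDeg (Finsupp.single Q m) = m :=
  Finsupp.degree_single Q m

lemma divPointSum_eq_liftAddHom [AddCommGroup Pt] (D : Pt →₀ ℤ) :
    divPointSum D = Finsupp.liftAddHom (fun Q : Pt => zmultiplesHom Pt Q) D := rfl

lemma divPointSum_sub [AddCommGroup Pt] (A B : Pt →₀ ℤ) :
    divPointSum (A - B) = divPointSum A - divPointSum B := by
  simp only [divPointSum_eq_liftAddHom, map_sub]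

lemma divPointSum_neg [AddCommGroup Pt] (A : Pt →₀ ℤ) : divPointSum (-A) = -divPointSum A := by
  simp only [divPointSum_eq_liftAddHom, map_neg]

noncomputable def reducedDivisor (S : Finset Pt) : Pt →₀ ℤ := ∑ Q ∈ S, Finsupp.single Q 1

lemma reducedDivisor_apply [DecidableEq Pt] (S : Finset Pt) (Q : Pt) :
    reducedDivisor S Q = if Q ∈ S then 1 else 0 := by
  simp [reducedDivisor, Finsupp.finsetSum_apply, Finsupp.single_apply]

lemma divDeg_reducedDivisor (S : Finset Pt) : divDeg (reducedDivisor S) = #S := by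
  simp [reducedDivisor, divDeg_eq_degree]

lemma divPointSum_reducedDivisor [AddCommGroup Pt] (S : Finset Pt) :
    divPointSum (reducedDivisor S) = ∑ Q ∈ S, Q := by
  simp [reducedDivisor, divPointSum_eq_liftAddHom]

end Divisors

section RiemannRochSpaces

variable {K F Pt : Type*} [Field K] [Field F] [Algebra K F]
  {ordv : Pt → F → ℤ} {LL : (Pt →₀ ℤ) → Submodule K F}

lemma ordv_nonneg_of_mem_LL (hLL : ∀ G f, f ∈ LL G ↔ f = 0 ∨ ∀ Q, -(G Q) ≤ ordv Q f)
    {G : Pt →₀ ℤ} {f : F} (hf : f ∈ LL G) (hf0 : f ≠ 0) {Q : Pt} (hQ : G Q ≤ 0) :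
    0 ≤ ordv Q f := by
  have := ((hLL G f).1 hf).resolve_left hf0 Q
  omega

lemma LL_ne_bot_of_one_le_divDeg
    (hRR : ∀ G : Pt →₀ ℤ, 1 ≤ divDeg G → (Module.finrank K (LL G) : ℤ) = divDeg G)
    {A : Pt →₀ ℤ} (hA : 1 ≤ divDeg A) : LL A ≠ ⊥ := by
  intro hbot
  have := hRR A hA
  rw [hbot, finrank_bot] at this
  omega

lemma ordv_eq_neg_of_mem_LL (hLL : ∀ G f, f ∈ LL G ↔ f = 0 ∨ ∀ Q, -(G Q) ≤ ordv Q f)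
    (hneg : ∀ G : Pt →₀ ℤ, divDeg G < 0 → LL G = ⊥)
    {A : Pt →₀ ℤ} (hA : divDeg A = 0) {f : F} (hf : f ∈ LL A) (hf0 : f ≠ 0) (Q : Pt) :
    ordv Q f = -A Q := by
  classical
  have hle := ((hLL A f).1 hf).resolve_left hf0
  refine (hle Q).antisymm' (not_lt.1 fun hlt => hf0 ?_)
  have hmem : f ∈ LL (A - Finsupp.single Q 1) := by
    refine (hLL _ f).2 (Or.inr fun Q' => ?_)
    by_cases h : Q = Q'
    · subst h
      simp only [Finsupp.sub_apply, Finsupp.single_eq_same]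
      omega
    · simpa [Finsupp.single_apply, h] using hle Q'
  rwa [hneg _ (by rw [divDeg_sub, hA, divDeg_single]; norm_num), Submodule.mem_bot] at hmem

lemma LL_ne_bot_iff_divPointSum_eq_zero [AddCommGroup Pt]
    (hLL : ∀ G f, f ∈ LL G ↔ f = 0 ∨ ∀ Q, -(G Q) ≤ ordv Q f)
    (hneg : ∀ G : Pt →₀ ℤ, divDeg G < 0 → LL G = ⊥)
    (hprinc_iff : ∀ D : Pt →₀ ℤ, divDeg D = 0 →
      ((∃ f : F, f ≠ 0 ∧ ∀ Q : Pt, ordv Q f = D Q) ↔ divPointSum D = 0))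
    {A : Pt →₀ ℤ} (hA : divDeg A = 0) : LL A ≠ ⊥ ↔ divPointSum A = 0 := by
  rw [← neg_eq_zero, ← divPointSum_neg, ← hprinc_iff (-A) (by rw [divDeg_neg, hA, neg_zero]),
    Submodule.ne_bot_iff]
  constructor
  · rintro ⟨f, hf, hf0⟩
    exact ⟨f, hf0, fun Q => ordv_eq_neg_of_mem_LL hLL hneg hA hf hf0 Q⟩
  · rintro ⟨f, hf0, hord⟩
    exact ⟨f, (hLL A f).2 (Or.inr fun Q => (hord Q).ge), hf0⟩

lemma mem_LL_sub_reducedDivisor_iff {eval : Pt → F → K}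
    (hLL : ∀ G f, f ∈ LL G ↔ f = 0 ∨ ∀ Q, -(G Q) ≤ ordv Q f)
    (hev0 : ∀ Q, eval Q 0 = 0)
    (hevzero : ∀ Q (f : F), f ≠ 0 → 0 ≤ ordv Q f → (eval Q f = 0 ↔ 0 < ordv Q f))
    {G : Pt →₀ ℤ} {S : Finset Pt} (hS : ∀ Q ∈ S, G Q = 0) (f : F) :
    f ∈ LL (G - reducedDivisor S) ↔ f ∈ LL G ∧ ∀ Q ∈ S, eval Q f = 0 := by
  classical
  by_cases hf0 : f = 0
  · simp [hf0, hev0]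
  simp only [hLL _ f, hf0, false_or, Finsupp.sub_apply, reducedDivisor_apply]
  constructor
  · intro h
    have hfG : ∀ Q, -(G Q) ≤ ordv Q f := fun Q => by
      have := h Q
      split_ifs at this <;> omega
    refine ⟨hfG, fun Q hQ => (hevzero Q f hf0 (by simpa [hS Q hQ] using hfG Q)).2 ?_⟩
    have := h Q
    rw [if_pos hQ, hS Q hQ] at this
    omega
  · rintro ⟨hfG, hvan⟩ Q
    by_cases hQ : Q ∈ S
    · have := (hevzero Q f hf0 (by simpa [hS Q hQ] using hfG Q)).1 (hvan Q hQ)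
      rw [if_pos hQ, hS Q hQ]
      omega
    · simpa [hQ] using hfG Q

end RiemannRochSpaces

section Evaluation

variable {K F Pt : Type*} [Field K] [Field F] [Algebra K F]
  {ordv : Pt → F → ℤ} {LL : (Pt →₀ ℤ) → Submodule K F} {eval : Pt → F → K}

lemma eval_smul_of_ordv_nonneg (hconst : ∀ Q (c : K), c ≠ 0 → ordv Q ((algebraMap K F) c) = 0)
    (hev0 : ∀ Q, eval Q 0 = 0)
    (hevC : ∀ Q (c : K), eval Q ((algebraMap K F) c) = c)
    (hevmul : ∀ Q (f g : F), f ≠ 0 → g ≠ 0 → 0 ≤ ordv Q f → 0 ≤ ordv Q g →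
      eval Q (f * g) = eval Q f * eval Q g)
    {Q : Pt} {f : F} (hf : f ≠ 0 → 0 ≤ ordv Q f) (c : K) :
    eval Q (c • f) = c * eval Q f := by
  by_cases hc : c = 0
  · simp [hc, hev0]
  by_cases hf0 : f = 0
  · simp [hf0, hev0]
  have hc' : algebraMap K F c ≠ 0 := (map_ne_zero _).2 hc
  rw [Algebra.smul_def, hevmul Q _ f hc' hf0 (hconst Q c hc).ge (hf hf0), hevC]

lemma eval_add_of_ordv_nonneg (hconst : ∀ Q (c : K), c ≠ 0 → ordv Q ((algebraMap K F) c) = 0)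
    (hev0 : ∀ Q, eval Q 0 = 0)
    (hevC : ∀ Q (c : K), eval Q ((algebraMap K F) c) = c)
    (hevadd : ∀ Q (f g : F), f ≠ 0 → g ≠ 0 → f + g ≠ 0 → 0 ≤ ordv Q f → 0 ≤ ordv Q g →
      eval Q (f + g) = eval Q f + eval Q g)
    (hevmul : ∀ Q (f g : F), f ≠ 0 → g ≠ 0 → 0 ≤ ordv Q f → 0 ≤ ordv Q g →
      eval Q (f * g) = eval Q f * eval Q g)
    {Q : Pt} {f g : F} (hf : f ≠ 0 → 0 ≤ ordv Q f) (hg : g ≠ 0 → 0 ≤ ordv Q g) :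
    eval Q (f + g) = eval Q f + eval Q g := by
  by_cases hf0 : f = 0
  · simp [hf0, hev0]
  by_cases hg0 : g = 0
  · simp [hg0, hev0]
  by_cases hfg : f + g = 0
  · have hgf : g = (-1 : K) • f := by rw [neg_one_smul]; exact eq_neg_of_add_eq_zero_right hfg
    rw [hfg, hev0, hgf, eval_smul_of_ordv_nonneg hconst hev0 hevC hevmul hf]
    ring
  exact hevadd Q f g hf0 hg0 hfg (hf hf0) (hg hg0)

def evalMap (hconst : ∀ Q (c : K), c ≠ 0 → ordv Q ((algebraMap K F) c) = 0)
    (hev0 : ∀ Q, eval Q 0 = 0)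
    (hevC : ∀ Q (c : K), eval Q ((algebraMap K F) c) = c)
    (hevadd : ∀ Q (f g : F), f ≠ 0 → g ≠ 0 → f + g ≠ 0 → 0 ≤ ordv Q f → 0 ≤ ordv Q g →
      eval Q (f + g) = eval Q f + eval Q g)
    (hevmul : ∀ Q (f g : F), f ≠ 0 → g ≠ 0 → 0 ≤ ordv Q f → 0 ≤ ordv Q g →
      eval Q (f * g) = eval Q f * eval Q g)
    {ι : Type*} (P : ι → Pt) (V : Submodule K F) (hV : ∀ f ∈ V, ∀ i, f ≠ 0 → 0 ≤ ordv (P i) f) :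
    V →ₗ[K] (ι → K) where
  toFun f i := eval (P i) f
  map_add' f g := funext fun i =>
    eval_add_of_ordv_nonneg hconst hev0 hevC hevadd hevmul (hV f f.2 i) (hV g g.2 i)
  map_smul' c f := funext fun i => eval_smul_of_ordv_nonneg hconst hev0 hevC hevmul (hV f f.2 i) c

lemma exists_codeword_vanishing_iff
    (hLL : ∀ G f, f ∈ LL G ↔ f = 0 ∨ ∀ Q, -(G Q) ≤ ordv Q f)
    (hneg : ∀ G : Pt →₀ ℤ, divDeg G < 0 → LL G = ⊥)
    (hconst : ∀ Q (c : K), c ≠ 0 → ordv Q ((algebraMap K F) c) = 0)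
    (hev0 : ∀ Q, eval Q 0 = 0)
    (hevC : ∀ Q (c : K), eval Q ((algebraMap K F) c) = c)
    (hevadd : ∀ Q (f g : F), f ≠ 0 → g ≠ 0 → f + g ≠ 0 → 0 ≤ ordv Q f → 0 ≤ ordv Q g →
      eval Q (f + g) = eval Q f + eval Q g)
    (hevmul : ∀ Q (f g : F), f ≠ 0 → g ≠ 0 → 0 ≤ ordv Q f → 0 ≤ ordv Q g →
      eval Q (f * g) = eval Q f * eval Q g)
    (hevzero : ∀ Q (f : F), f ≠ 0 → 0 ≤ ordv Q f → (eval Q f = 0 ↔ 0 < ordv Q f))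
    {ι : Type*} [Fintype ι] {G : Pt →₀ ℤ} (P : ι ↪ Pt) (hPG : ∀ i, G (P i) = 0)
    (hdeg : divDeg G < Fintype.card ι) {C : Submodule K (ι → K)}
    (hC : C = Submodule.span K ((fun f => fun i => eval (P i) f) '' (LL G : Set F)))
    (T : Finset ι) :
    (∃ c ∈ C, c ≠ 0 ∧ ∀ i ∈ T, c i = 0) ↔ LL (G - reducedDivisor (T.map P)) ≠ ⊥ := by
  have hV : ∀ f ∈ LL G, ∀ i, f ≠ 0 → 0 ≤ ordv (P i) f := fun f hf i hf0 =>
    ordv_nonneg_of_mem_LL hLL hf hf0 (hPG i).le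
  set ev := evalMap hconst hev0 hevC hevadd hevmul P (LL G) hV
  have hCev : C = LinearMap.range ev := by
    rw [hC, Set.image_eq_range, ← Submodule.span_eq (LinearMap.range ev), LinearMap.coe_range]
    rfl
  have hvanish : ∀ (T : Finset ι) (f : F),
      f ∈ LL (G - reducedDivisor (T.map P)) ↔ f ∈ LL G ∧ ∀ i ∈ T, eval (P i) f = 0 :=
    fun T f => by
      rw [mem_LL_sub_reducedDivisor_iff hLL hev0 hevzero (by simpa using fun i _ => hPG i)]
      simp
  have hinj : Function.Injective ev := by
    refine LinearMap.ker_eq_bot.1 (LinearMap.ker_eq_bot'.2 fun f hf => Subtype.ext ?_)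
    have hmem := (hvanish Finset.univ f).2 ⟨f.2, fun i _ => congrFun hf i⟩
    rwa [hneg _ (by simpa [divDeg_sub, divDeg_reducedDivisor] using hdeg), Submodule.mem_bot]
      at hmem
  rw [hCev, Submodule.ne_bot_iff]
  constructor
  · rintro ⟨_, ⟨f, rfl⟩, hc0, hcT⟩
    refine ⟨f, (hvanish T f).2 ⟨f.2, hcT⟩, fun hf0 => hc0 ?_⟩
    rw [show f = 0 from Subtype.ext hf0, map_zero]
  · rintro ⟨f, hf, hf0⟩
    obtain ⟨hfG, hfT⟩ := (hvanish T f).1 hf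
    refine ⟨ev ⟨f, hfG⟩, LinearMap.mem_range_self _ _, fun h => hf0 ?_, hfT⟩
    simpa using hinj (h.trans (map_zero ev).symm)

end Evaluation

section Hamming

variable {ι K : Type*} [Fintype ι] [Zero K] [DecidableEq K]

lemma hammingNorm_add_card_filter_eq_zero (c : ι → K) :
    hammingNorm c + #{i | c i = 0} = Fintype.card ι := by
  rw [hammingNorm, add_comm, Finset.card_filter_add_card_filter_not, Finset.card_univ]

lemma exists_hammingNorm_le_iff {C : Set (ι → K)} {m : ℕ} (hm : m ≤ Fintype.card ι) :
    (∃ c ∈ C, c ≠ 0 ∧ hammingNorm c ≤ Fintype.card ι - m) ↔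
      ∃ T : Finset ι, #T = m ∧ ∃ c ∈ C, c ≠ 0 ∧ ∀ i ∈ T, c i = 0 := by
  constructor
  · rintro ⟨c, hc, hc0, hwt⟩
    have := hammingNorm_add_card_filter_eq_zero c
    obtain ⟨T, hTZ, hT⟩ := Finset.exists_subset_card_eq (s := {i | c i = 0}) (n := m) (by omega)
    exact ⟨T, hT, c, hc, hc0, fun i hi => (Finset.mem_filter.1 (hTZ hi)).2⟩
  · rintro ⟨T, hT, c, hc, hc0, hcT⟩
    have hTZ : T ⊆ ({i | c i = 0} : Finset ι) := fun i hi =>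
      Finset.mem_filter.2 ⟨Finset.mem_univ i, hcT i hi⟩
    have := Finset.card_le_card hTZ
    have := hammingNorm_add_card_filter_eq_zero c
    exact ⟨c, hc, hc0, by omega⟩

lemma eq_add_one_iff_not_exists_hammingNorm_le {C : Set (ι → K)} {d m : ℕ}
    (hd_le : ∀ c ∈ C, c ≠ 0 → d ≤ hammingNorm c)
    (hd_attained : ∃ c ∈ C, c ≠ 0 ∧ hammingNorm c = d)
    (hbound : ∃ c ∈ C, c ≠ 0 ∧ hammingNorm c ≤ m + 1) :
    d = m + 1 ↔ ¬ ∃ c ∈ C, c ≠ 0 ∧ hammingNorm c ≤ m := by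
  constructor
  · rintro rfl ⟨c, hc, hc0, hwt⟩
    have := hd_le c hc hc0
    omega
  · intro h
    obtain ⟨c₀, hc₀, hc₀0, rfl⟩ := hd_attained
    obtain ⟨c₁, hc₁, hc₁0, hwt₁⟩ := hbound
    have := hd_le c₁ hc₁ hc₁0
    have : ¬ hammingNorm c₀ ≤ m := fun hle => h ⟨c₀, hc₀, hc₀0, hle⟩
    omega

end Hamming

lemma exists_card_eq_add_one_sum_eq_iff {ι A : Type*} [Fintype ι] [DecidableEq ι]
    [AddCommGroup A] (P : ι ↪ A) (σ : A) (m : ℕ) :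
    (∃ T : Finset ι, #T = m + 1 ∧ ∑ i ∈ T, P i = σ) ↔
      ∃ s : Fin m → ι, Function.Injective s ∧
        σ - ∑ t, P (s t) ∈ Set.range P ∧ ∀ t, σ - ∑ t', P (s t') ≠ P (s t) := by
  constructor
  · rintro ⟨T, hT, rfl⟩
    obtain ⟨j, hj⟩ : T.Nonempty := Finset.card_pos.1 (by omega)
    have hT' : Fintype.card (T.erase j) = m := by
      rw [Fintype.card_coe, Finset.card_erase_of_mem hj, hT, Nat.add_sub_cancel]
    set e := Fintype.equivFinOfCardEq hT'
    have hsum : ∑ t, P (e.symm t) = ∑ i ∈ T.erase j, P i := by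
      rw [← Finset.sum_coe_sort (T.erase j), ← e.symm.sum_comp]
    have hQ : ∑ i ∈ T, P i - ∑ t, P (e.symm t) = P j := by
      rw [hsum, ← Finset.add_sum_erase T _ hj, add_sub_cancel_right]
    refine ⟨fun t => e.symm t, Subtype.val_injective.comp e.symm.injective, ⟨j, hQ.symm⟩,
      fun t h => ?_⟩
    rw [hQ, P.apply_eq_iff_eq] at h
    exact Finset.ne_of_mem_erase (e.symm t).2 h.symm
  · rintro ⟨s, hs, ⟨j, hj⟩, hne⟩
    have hjs : j ∉ Finset.univ.map ⟨s, hs⟩ := by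
      simp only [Finset.mem_map, Finset.mem_univ, true_and, not_exists]
      exact fun t ht => hne t (by rw [← hj, ← ht]; rfl)
    refine ⟨insert j (Finset.univ.map ⟨s, hs⟩), ?_, ?_⟩
    · rw [Finset.card_insert_of_notMem hjs, Finset.card_map, Finset.card_univ, Fintype.card_fin]
    · rw [Finset.sum_insert hjs, Finset.sum_map, hj]
      exact sub_add_cancel σ _

theorem elliptic_AG_code_MDS_iff_general
    {K F Pt : Type*} [Field K] [DecidableEq K] [Field F] [Algebra K F] [AddCommGroup Pt]
    (ordv : Pt → F → ℤ)
    (hconst : ∀ Q (c : K), c ≠ 0 → ordv Q ((algebraMap K F) c) = 0)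
    (LL : (Pt →₀ ℤ) → Submodule K F)
    (hLL : ∀ G f, f ∈ LL G ↔ f = 0 ∨ ∀ Q, -(G Q) ≤ ordv Q f)
    (hRR : ∀ G : Pt →₀ ℤ, 1 ≤ divDeg G → (Module.finrank K (LL G) : ℤ) = divDeg G)
    (hneg : ∀ G : Pt →₀ ℤ, divDeg G < 0 → LL G = ⊥)
    -- a degree-zero divisor is principal iff its group-law point sum is `O`
    -- (the characterization of principal divisors on an elliptic curve):
    (hprinc_iff : ∀ D : Pt →₀ ℤ, divDeg D = 0 →
      ((∃ f : F, f ≠ 0 ∧ ∀ Q : Pt, ordv Q f = D Q) ↔ divPointSum D = 0))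
    (eval : Pt → F → K)
    (hev0 : ∀ Q, eval Q 0 = 0)
    (hevC : ∀ Q (c : K), eval Q ((algebraMap K F) c) = c)
    (hevadd : ∀ Q (f g : F), f ≠ 0 → g ≠ 0 → f + g ≠ 0 → 0 ≤ ordv Q f → 0 ≤ ordv Q g →
      eval Q (f + g) = eval Q f + eval Q g)
    (hevmul : ∀ Q (f g : F), f ≠ 0 → g ≠ 0 → 0 ≤ ordv Q f → 0 ≤ ordv Q g →
      eval Q (f * g) = eval Q f * eval Q g)
    (hevzero : ∀ Q (f : F), f ≠ 0 → 0 ≤ ordv Q f → (eval Q f = 0 ↔ 0 < ordv Q f))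
    (n k : ℕ) (hk : 1 < k) (hkn : k < n)
    (G : Pt →₀ ℤ) (hG : divDeg G = k)
    (P : Fin n → Pt) (hPinj : Function.Injective P) (hPG : ∀ i, G (P i) = 0)
    (C : Submodule K (Fin n → K))
    (hC : C = Submodule.span K ((fun f => fun i => eval (P i) f) '' (LL G : Set F)))
    (d : ℕ)
    (hd_le : ∀ c ∈ C, c ≠ 0 → d ≤ hammingNorm c)
    (hd_attained : ∃ c ∈ C, c ≠ 0 ∧ hammingNorm c = d) :
    d = n - k + 1 ↔
      ∀ s : Fin (k - 1) → Fin n, Function.Injective s →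
        (divPointSum G - ∑ t, P (s t)) ∉ Set.range P ∨
          ∃ t, divPointSum G - ∑ t', P (s t') = P (s t) := by
  classical
  let P' : Fin n ↪ Pt := ⟨P, hPinj⟩
  have hdeg (T : Finset (Fin n)) : divDeg (G - reducedDivisor (T.map P')) = k - #T := by
    rw [divDeg_sub, divDeg_reducedDivisor, hG, Finset.card_map]
  have hcode := exists_codeword_vanishing_iff hLL hneg hconst hev0 hevC hevadd hevmul hevzero P'
    hPG (by rw [hG, Fintype.card_fin]; exact_mod_cast hkn) hC
  have hweight (m : ℕ) (hm : m ≤ n) :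
      (∃ c ∈ (C : Set (Fin n → K)), c ≠ 0 ∧ hammingNorm c ≤ n - m) ↔
        ∃ T : Finset (Fin n), #T = m ∧ LL (G - reducedDivisor (T.map P')) ≠ ⊥ := by
    simp only [← hcode]
    simpa only [Fintype.card_fin, SetLike.mem_coe] using
      exists_hammingNorm_le_iff (C := (C : Set (Fin n → K))) (m := m) (by simpa using hm)
  have hbound : ∃ c ∈ (C : Set (Fin n → K)), c ≠ 0 ∧ hammingNorm c ≤ n - k + 1 := by
    obtain ⟨T, -, hT⟩ := Finset.exists_subset_card_eq (s := (Finset.univ : Finset (Fin n)))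
      (n := k - 1) (by simp only [Finset.card_univ, Fintype.card_fin]; omega)
    rw [show n - k + 1 = n - (k - 1) by omega, hweight (k - 1) (by omega)]
    exact ⟨T, hT, LL_ne_bot_of_one_le_divDeg hRR (by rw [hdeg, hT]; omega)⟩
  have hprincipal (T : Finset (Fin n)) (hT : #T = k) :
      LL (G - reducedDivisor (T.map P')) ≠ ⊥ ↔ ∑ i ∈ T, P' i = divPointSum G := by
    rw [LL_ne_bot_iff_divPointSum_eq_zero hLL hneg hprinc_iff (by rw [hdeg, hT, sub_self]),
      divPointSum_sub, divPointSum_reducedDivisor, Finset.sum_map, sub_eq_zero, eq_comm]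
  obtain ⟨m, rfl⟩ : ∃ m, k = m + 1 := ⟨k - 1, by omega⟩
  rw [eq_add_one_iff_not_exists_hammingNorm_le hd_le hd_attained hbound, hweight _ hkn.le,
    exists_congr fun T => and_congr_right (hprincipal T), exists_card_eq_add_one_sum_eq_iff]
  simp only [not_exists, not_and, not_forall, not_not, or_iff_not_imp_left]
  rfl

/-- In the elliptic AG-code setting (genus 1, `n > deg G = k > 1`, `D = P₁ + ⋯ + P_n` a sum
of distinct rational points avoiding `supp G`), the code `C_L(D, G)` is MDS, i.e.
`d = n - k + 1`, if and only if for any `k - 1` points `P_{i₁}, …, P_{i_{k-1}}` in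
`supp D`, the point `Q = G ⊖ P_{i₁} ⊖ ⋯ ⊖ P_{i_{k-1}}` (computed via the elliptic group
law, so that `G - Σ_t P_{i_t} - Q` is a principal divisor) satisfies `Q ∉ supp D` or
`Q ∈ {P_{i₁}, …, P_{i_{k-1}}}`. -/
theorem elliptic_AG_code_MDS_iff
    {K F Pt : Type*} [Field K] [DecidableEq K] [Field F] [Algebra K F] [AddCommGroup Pt]
    (ordv : Pt → F → ℤ)
    (hmul : ∀ Q (f g : F), f ≠ 0 → g ≠ 0 → ordv Q (f * g) = ordv Q f + ordv Q g)
    (haddv : ∀ Q (f g : F), f ≠ 0 → g ≠ 0 → f + g ≠ 0 →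
      min (ordv Q f) (ordv Q g) ≤ ordv Q (f + g))
    (hconst : ∀ Q (c : K), c ≠ 0 → ordv Q ((algebraMap K F) c) = 0)
    (LL : (Pt →₀ ℤ) → Submodule K F)
    (hLL : ∀ G f, f ∈ LL G ↔ f = 0 ∨ ∀ Q, -(G Q) ≤ ordv Q f)
    (hRR : ∀ G : Pt →₀ ℤ, 1 ≤ divDeg G → (Module.finrank K (LL G) : ℤ) = divDeg G)
    (hneg : ∀ G : Pt →₀ ℤ, divDeg G < 0 → LL G = ⊥)
    -- a degree-zero divisor is principal iff its group-law point sum is `O`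
    -- (the characterization of principal divisors on an elliptic curve):
    (hprinc_iff : ∀ D : Pt →₀ ℤ, divDeg D = 0 →
      ((∃ f : F, f ≠ 0 ∧ ∀ Q : Pt, ordv Q f = D Q) ↔ divPointSum D = 0))
    (eval : Pt → F → K)
    (hev0 : ∀ Q, eval Q 0 = 0)
    (hevC : ∀ Q (c : K), eval Q ((algebraMap K F) c) = c)
    (hevadd : ∀ Q (f g : F), f ≠ 0 → g ≠ 0 → f + g ≠ 0 → 0 ≤ ordv Q f → 0 ≤ ordv Q g →
      eval Q (f + g) = eval Q f + eval Q g)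
    (hevmul : ∀ Q (f g : F), f ≠ 0 → g ≠ 0 → 0 ≤ ordv Q f → 0 ≤ ordv Q g →
      eval Q (f * g) = eval Q f * eval Q g)
    (hevzero : ∀ Q (f : F), f ≠ 0 → 0 ≤ ordv Q f → (eval Q f = 0 ↔ 0 < ordv Q f))
    (n k : ℕ) (hk : 1 < k) (hkn : k < n)
    (G : Pt →₀ ℤ) (hG : divDeg G = k)
    (P : Fin n → Pt) (hPinj : Function.Injective P) (hPG : ∀ i, G (P i) = 0)
    (C : Submodule K (Fin n → K))
    (hC : C = Submodule.span K ((fun f => fun i => eval (P i) f) '' (LL G : Set F)))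
    (d : ℕ)
    (hd_le : ∀ c ∈ C, c ≠ 0 → d ≤ hammingNorm c)
    (hd_attained : ∃ c ∈ C, c ≠ 0 ∧ hammingNorm c = d) :
    d = n - k + 1 ↔
      ∀ s : Fin (k - 1) → Fin n, Function.Injective s →
        (divPointSum G - ∑ t, P (s t)) ∉ Set.range P ∨
          ∃ t, divPointSum G - ∑ t', P (s t') = P (s t) :=
  elliptic_AG_code_MDS_iff_general ordv hconst LL hLL hRR hneg hprinc_iff eval hev0 hevC hevadd
    hevmul hevzero n k hk hkn G hG P hPinj hPG C hC d hd_le hd_attained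
end
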